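/- Let f₁₂ be a representation of A in B and g₁₂ a representation of A' in B' (over languages L₁, L₂), let f₂₃ be an effective structured representation of B in C and g₂₃ an effective structured representation of B' in C' (over languages L₂, L₃), let (h₁, h₂) be a morphism of representations from f₁₂ to g₁₂, and let h₃ : C → C' be an L₃-homomorphism such that h₃ (f₂₃ b c) = g₂₃ (h₂ b) (h₃ c) for all b : B, c : C (i.e., (h₂, h₃) is a morphism from f₂₃ to g₂₃). Then the map *h₃ : Set.range f₂₃ → Set.range g₂₃ given by *h₃ ⟨f₂₃ b, _⟩ = ⟨g₂₃ (h₂ b), _⟩ is well defined, is an L₂-homomorphism between the induced L₂-structures on Set.range f₂₃ and Set.range g₂₃, and satisfies *h₃ (F a φ) = G (h₁ a) (*h₃ φ) for every a : A and φ ∈ Set.range f₂₃, where F and G denote the induced representations of A in Set.range f₂₃ and of A' in Set.range g₂₃; that is, (h₁, *h₃) is a morphism of representations from F to G. -/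
import Mathlib

open FirstOrder Language Structure

/-- A map `h : M → N` between `L`-structures commutes with all function symbols
(i.e. is an `L`-homomorphism for a language consisting of function symbols only). -/
def IsHomOn (L : FirstOrder.Language) {M N : Type*} [L.Structure M] [L.Structure N]
    (h : M → N) : Prop :=
  ∀ (k : ℕ) (ω : L.Functions k) (x : Fin k → M),
    h (funMap ω x) = funMap ω (fun j => h (x j))

/-- The range of an `L`-homomorphism `g : B → M`, as an `L`-substructure of `M`. -/
def rangeSub (L : FirstOrder.Language) {B M : Type*} [L.Structure B] [L.Structure M]
    (g : B → M) (hg : IsHomOn L g) : L.Substructure M where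
  carrier := Set.range g
  fun_mem := by
    intro k ω x hx
    choose b hb using hx
    exact ⟨funMap ω b, by rw [hg k ω b]; exact congrArg _ (funext fun j => hb j)⟩

/-- Given a morphism `(h₁, h₂)` of representations from `f₁₂` to `g₁₂` and
an `L₃`-homomorphism `h₃` with `(h₂, h₃)` a morphism from the effective structured
representation `f₂₃` to the effective structured representation `g₂₃`, the induced map
`*h₃ : Set.range f₂₃ → Set.range g₂₃`, `*h₃ ⟨f₂₃ b, _⟩ = ⟨g₂₃ (h₂ b), _⟩`, is well defined,
is an `L₂`-homomorphism of the induced structures, and `(h₁, *h₃)` is a morphism of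
representations from the induced representation `F` to the induced representation `G`. -/
theorem induced_morphism_on_ranges
    (L₁ L₂ L₃ : FirstOrder.Language) (A B C A' B' C' : Type*)
    [L₁.Structure A] [L₂.Structure B] [L₃.Structure C] [L₂.Structure (C → C)]
    [L₁.Structure A'] [L₂.Structure B'] [L₃.Structure C'] [L₂.Structure (C' → C')]
    (f₁₂ : A → B → B) (hf₁₂ : ∀ a, IsHomOn L₂ (f₁₂ a))
    (g₁₂ : A' → B' → B') (hg₁₂ : ∀ a, IsHomOn L₂ (g₁₂ a))
    (f₂₃ : B → C → C) (hf₂₃_hom : IsHomOn L₂ f₂₃) (hf₂₃_each : ∀ b, IsHomOn L₃ (f₂₃ b))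
    (hf₂₃_eff : Function.Injective f₂₃)
    (g₂₃ : B' → C' → C') (hg₂₃_hom : IsHomOn L₂ g₂₃) (hg₂₃_each : ∀ b, IsHomOn L₃ (g₂₃ b))
    (hg₂₃_eff : Function.Injective g₂₃)
    (h₁ : A → A') (hh₁ : IsHomOn L₁ h₁)
    (h₂ : B → B') (hh₂ : IsHomOn L₂ h₂)
    (hmor₁₂ : ∀ (a : A) (b : B), h₂ (f₁₂ a b) = g₁₂ (h₁ a) (h₂ b))
    (h₃ : C → C') (hh₃ : IsHomOn L₃ h₃)
    (hmor₂₃ : ∀ (b : B) (c : C), h₃ (f₂₃ b c) = g₂₃ (h₂ b) (h₃ c))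
    (F : A → (rangeSub L₂ f₂₃ hf₂₃_hom) → (rangeSub L₂ f₂₃ hf₂₃_hom))
    (hF : ∀ (a : A) (b : B),
      F a ⟨f₂₃ b, Set.mem_range_self b⟩ = ⟨f₂₃ (f₁₂ a b), Set.mem_range_self (f₁₂ a b)⟩)
    (G : A' → (rangeSub L₂ g₂₃ hg₂₃_hom) → (rangeSub L₂ g₂₃ hg₂₃_hom))
    (hG : ∀ (a : A') (b : B'),
      G a ⟨g₂₃ b, Set.mem_range_self b⟩ = ⟨g₂₃ (g₁₂ a b), Set.mem_range_self (g₁₂ a b)⟩) :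
    ∃ H : (rangeSub L₂ f₂₃ hf₂₃_hom) → (rangeSub L₂ g₂₃ hg₂₃_hom),
      (∀ b : B, H ⟨f₂₃ b, Set.mem_range_self b⟩ = ⟨g₂₃ (h₂ b), Set.mem_range_self (h₂ b)⟩) ∧
      IsHomOn L₂ H ∧
      ∀ (a : A) (φ : (rangeSub L₂ f₂₃ hf₂₃_hom)), H (F a φ) = G (h₁ a) (H φ) := by
  classical
  have key : ∀ φ : (rangeSub L₂ f₂₃ hf₂₃_hom), ∃ b : B, f₂₃ b = (φ : C → C) := fun φ => φ.2
  choose r hr using key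
  have hr' : ∀ b : B, r ⟨f₂₃ b, Set.mem_range_self b⟩ = b := fun b => hf₂₃_eff (hr _)
  refine ⟨fun φ => ⟨g₂₃ (h₂ (r φ)), Set.mem_range_self _⟩, fun b => Subtype.ext (by show g₂₃ (h₂ (r _)) = _; rw [hr']), ?_, ?_⟩
  · intro k ω x
    apply Subtype.ext
    have h1 : f₂₃ (r (funMap ω x)) = f₂₃ (funMap ω fun j => r (x j)) := by
      rw [hr (funMap ω x), hf₂₃_hom]
      show funMap ω (fun j => (x j : C → C)) = _
      exact congrArg _ (funext fun j => (hr (x j)).symm)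
    have h2 : r (funMap ω x) = funMap ω fun j => r (x j) := hf₂₃_eff h1
    show g₂₃ (h₂ (r (funMap ω x))) = funMap ω fun j => g₂₃ (h₂ (r (x j)))
    rw [h2, hh₂, hg₂₃_hom]
  · intro a φ
    have hφ : φ = ⟨f₂₃ (r φ), Set.mem_range_self _⟩ := Subtype.ext (hr φ).symm
    rw [hφ]
    simp only [hF, hr', hG, hmor₁₂]
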